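/- Let n, k ∈ ℕ and t ∈ {1,…,n}^k. Then: (i) #V_t ≤ 1 + κ_1(t) + κ_2(t) + ⋯ + κ_k(t) − ℓ(t); (ii) if the multigraph of t contains at least one odd edge, then #V_t ≤ κ_1(t) + κ_2(t) + ⋯ + κ_k(t). -/

import Mathlib

open MeasureTheory ProbabilityTheory Filter Finset
open scoped BigOperators ENNReal NNReal Classical

noncomputable section

namespace RMT

variable {Ω : Type} [MeasurableSpace Ω]

/-- A triangular scheme: for each `n`, a symmetric `n × n` matrix of (measurable) real-valued
random variables, with entries indexed by `{1, …, n}²`. -/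
def IsTriangularScheme (a : ℕ → ℕ → ℕ → Ω → ℝ) : Prop :=
  ∀ n p q, p ∈ Finset.Icc 1 n → q ∈ Finset.Icc 1 n →
    a n p q = a n q p ∧ Measurable (a n p q)

/-- Condition (AAU1): distinct decay and boundedness, with constants `C k` and decay
parameter `α`.  The pairs `pq i` range over `{1,…,N}²`, are pairwise fundamentally
different (i.e. distinct as unordered pairs), and `δ i ≥ 1` are the multiplicities. -/
def AAU1 (P : Measure Ω) (a : ℕ → ℕ → ℕ → Ω → ℝ) (α : ℝ) (C : ℕ → ℝ) : Prop :=
  ∀ (N l : ℕ) (pq : Fin l → ℕ × ℕ),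
    (∀ i, (pq i).1 ∈ Finset.Icc 1 N ∧ (pq i).2 ∈ Finset.Icc 1 N) →
    (∀ i j, i ≠ j → s((pq i).1, (pq i).2) ≠ s((pq j).1, (pq j).2)) →
    ∀ n, N ≤ n → ∀ δ : Fin l → ℕ, (∀ i, 1 ≤ δ i) →
      |∫ ω, ∏ i, a n (pq i).1 (pq i).2 ω ^ δ i ∂P| ≤
        C (∑ i, δ i) / (n : ℝ) ^ (α * ((Finset.univ.filter fun i => δ i = 1).card : ℝ))

/-- Condition (AAU2): second moment condition with constants `C' l n`. -/
def AAU2 (P : Measure Ω) (a : ℕ → ℕ → ℕ → Ω → ℝ) (C' : ℕ → ℕ → ℝ) : Prop :=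
  ∀ (N l : ℕ) (pq : Fin l → ℕ × ℕ),
    (∀ i, (pq i).1 ∈ Finset.Icc 1 N ∧ (pq i).2 ∈ Finset.Icc 1 N) →
    (∀ i j, i ≠ j → s((pq i).1, (pq i).2) ≠ s((pq j).1, (pq j).2)) →
    ∀ n, N ≤ n →
      |(∫ ω, ∏ i, a n (pq i).1 (pq i).2 ω ^ 2 ∂P) - 1| ≤ C' l n

/-- Condition (AAU3): fourth moment condition with constants `D l n`. -/
def AAU3 (P : Measure Ω) (a : ℕ → ℕ → ℕ → Ω → ℝ) (D : ℕ → ℕ → ℝ) : Prop :=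
  ∀ (N l : ℕ) (hl : 0 < l) (pq : Fin l → ℕ × ℕ),
    (∀ i, (pq i).1 ∈ Finset.Icc 1 N ∧ (pq i).2 ∈ Finset.Icc 1 N) →
    (∀ i j, i ≠ j → s((pq i).1, (pq i).2) ≠ s((pq j).1, (pq j).2)) →
    ∀ n, N ≤ n →
      |∫ ω, a n (pq ⟨0, hl⟩).1 (pq ⟨0, hl⟩).2 ω ^ 4 *
          ((∏ i ∈ Finset.univ.erase ⟨0, hl⟩, a n (pq i).1 (pq i).2 ω ^ 2) - 1) ∂P| ≤ D l n

/-- `α`-almost uncorrelated triangular scheme. -/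
def AlmostUncorrelated (P : Measure Ω) (a : ℕ → ℕ → ℕ → Ω → ℝ) (α : ℝ) : Prop :=
  ∃ (C : ℕ → ℝ) (C' : ℕ → ℕ → ℝ),
    (∀ m, Tendsto (fun n => C' m n) atTop (nhds 0)) ∧ AAU1 P a α C ∧ AAU2 P a C'

/-- Strongly `α`-almost uncorrelated triangular scheme. -/
def StronglyAlmostUncorrelated (P : Measure Ω) (a : ℕ → ℕ → ℕ → Ω → ℝ) (α : ℝ) : Prop :=
  ∃ (C : ℕ → ℝ) (C' D : ℕ → ℕ → ℝ),
    (∀ m, Tendsto (fun n => C' m n) atTop (nhds 0)) ∧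
    (∀ m, Tendsto (fun n => D m n) atTop (nhds 0)) ∧
    AAU1 P a α C ∧ AAU2 P a C' ∧ AAU3 P a D

/-- Approximately uncorrelated triangular scheme (Hochstättler–Kirsch–Warzel). -/
def ApproxUncorrelated (P : Measure Ω) (a : ℕ → ℕ → ℕ → Ω → ℝ) : Prop :=
  ∃ (K : ℕ → ℕ → ℝ) (K' : ℕ → ℕ → ℝ),
    (∀ s m, 0 ≤ K s m) ∧ (∀ s n, 0 ≤ K' s n) ∧
    (∀ s, Tendsto (fun n => K' s n) atTop (nhds 0)) ∧
    ∀ (N s m : ℕ) (pq : Fin (s + m) → ℕ × ℕ),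
      (∀ i, (pq i).1 ∈ Finset.Icc 1 N ∧ (pq i).2 ∈ Finset.Icc 1 N) →
      (∀ i j : Fin (s + m), (i : ℕ) < s → i ≠ j →
        s((pq i).1, (pq i).2) ≠ s((pq j).1, (pq j).2)) →
      ∀ n, N ≤ n →
        |∫ ω, ∏ i, a n (pq i).1 (pq i).2 ω ∂P| ≤ K s m / (n : ℝ) ^ ((s : ℝ) / 2) ∧
        |(∫ ω, ∏ i ∈ Finset.univ.filter (fun i : Fin (s + m) => (i : ℕ) < s),
            a n (pq i).1 (pq i).2 ω ^ 2 ∂P) - 1| ≤ K' s n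

/-- A Wigner scheme: independent entries (up to symmetry), centered, unit variance,
with uniformly bounded moments of all orders. -/
def IsWignerScheme (P : Measure Ω) (a : ℕ → ℕ → ℕ → Ω → ℝ) : Prop :=
  IsTriangularScheme a ∧
  (∀ n : ℕ, iIndepFun (m := fun _ => (inferInstance : MeasurableSpace ℝ))
      (fun ij : {p : ℕ × ℕ // 1 ≤ p.1 ∧ p.1 ≤ p.2 ∧ p.2 ≤ n} => a n ij.1.1 ij.1.2) P) ∧
  (∀ n, ∀ p ∈ Finset.Icc 1 n, ∀ q ∈ Finset.Icc 1 n,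
      (∫ ω, a n p q ω ∂P) = 0 ∧ (∫ ω, a n p q ω ^ 2 ∂P) = 1) ∧
  (∀ k : ℕ, ∃ Cp : ℝ, ∀ n, ∀ p ∈ Finset.Icc 1 n, ∀ q ∈ Finset.Icc 1 n,
      (∫ ω, |a n p q ω| ^ k ∂P) ≤ Cp)

/-- `b` is an `n`-bandwidth: an odd number `< n`, or `n` itself. -/
def IsBandwidth (n b : ℕ) : Prop := (b < n ∧ Odd b) ∨ b = n

/-- The pair `(i,j) ∈ {1,…,n}²` is `bn`-relevant. -/
def BRelevant (n bn i j : ℕ) : Prop :=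
  bn = n ∨ |(i : ℤ) - (j : ℤ)| ≤ ((bn - 1) / 2 : ℕ) ∨
    (n : ℤ) - ((bn - 1) / 2 : ℕ) ≤ |(i : ℤ) - (j : ℤ)|

/-- The periodic random band matrix of dimension `n × n` based on the scheme `a` with
bandwidths `b` : entries `X_n(p,q) = b_n^{-1/2} a_n(p,q)` for `b_n`-relevant `(p,q)`, else `0`. -/
def bandMatrix (a : ℕ → ℕ → ℕ → Ω → ℝ) (b : ℕ → ℕ) (n : ℕ) (ω : Ω) :
    Matrix (Fin n) (Fin n) ℝ := fun i j =>
  if BRelevant n (b n) (i.1 + 1) (j.1 + 1)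
  then (Real.sqrt (b n))⁻¹ * a n (i.1 + 1) (j.1 + 1) ω else 0

/-- The empirical spectral distribution of a real symmetric matrix
(junk value `0` if the matrix is not symmetric). -/
def ESD {n : ℕ} (M : Matrix (Fin n) (Fin n) ℝ) : Measure ℝ :=
  if h : M.IsHermitian then
    ((n : ℝ≥0∞))⁻¹ • ∑ i : Fin n, Measure.dirac (h.eigenvalues i)
  else 0

/-- The semicircle distribution, with Lebesgue density
`(2π)⁻¹ √(4 - x²) 1_{[-2,2]}(x)`. -/
def semicircle : Measure ℝ :=
  volume.withDensity fun x =>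
    ENNReal.ofReal (if -2 ≤ x ∧ x ≤ 2 then (2 * Real.pi)⁻¹ * Real.sqrt (4 - x ^ 2) else 0)

/-- The semicircle law holds in probability for the random matrices `X n`. -/
def SemicircleLawInProbability (P : Measure Ω)
    (X : (n : ℕ) → Ω → Matrix (Fin n) (Fin n) ℝ) : Prop :=
  ∀ f : BoundedContinuousFunction ℝ ℝ,
    TendstoInMeasure P (fun n ω => ∫ x, f x ∂ ESD (X n ω)) atTop
      (fun _ => ∫ x, f x ∂ semicircle)

/-- The semicircle law holds almost surely for the random matrices `X n`. -/
def SemicircleLawAS (P : Measure Ω)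
    (X : (n : ℕ) → Ω → Matrix (Fin n) (Fin n) ℝ) : Prop :=
  ∀ f : BoundedContinuousFunction ℝ ℝ,
    ∀ᵐ ω ∂P, Tendsto (fun n => ∫ x, f x ∂ ESD (X n ω)) atTop
      (nhds (∫ x, f x ∂ semicircle))

/-- The family `Y` is Curie-Weiss(`β`, `card ι`)-distributed. -/
def IsCurieWeiss {ι : Type} [Fintype ι] (P : Measure Ω) (β : ℝ) (Y : ι → Ω → ℝ) : Prop :=
  (∀ i, Measurable (Y i)) ∧
  (∀ᵐ ω ∂P, ∀ i, Y i ω = 1 ∨ Y i ω = -1) ∧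
  ∃ Z : ℝ, 0 < Z ∧ ∀ y : ι → ℝ, (∀ i, y i = 1 ∨ y i = -1) →
    P {ω | ∀ i, Y i ω = y i} =
      ENNReal.ofReal (Z⁻¹ * Real.exp (β / (2 * Fintype.card ι) * (∑ i, y i) ^ 2))

/-- `Δ n = n (n+1) / 2`. -/
def Δn (n : ℕ) : ℕ := n * (n + 1) / 2

/-- Pair partitions of `{1, …, k}`, encoded as fixed-point-free involutions of `Fin k`. -/
def PairPartitions (k : ℕ) : Finset (Equiv.Perm (Fin k)) :=
  Finset.univ.filter fun π => ∀ r, π (π r) = r ∧ π r ≠ r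

/-- The product `∏_{{r,s} ∈ π} S (i r) (i s)` over the blocks of a pair partition `π`. -/
def pairProd {k m : ℕ} (S : Matrix (Fin m) (Fin m) ℝ) (i : Fin k → Fin m)
    (π : Equiv.Perm (Fin k)) : ℝ :=
  ∏ r ∈ Finset.univ.filter (fun r => r < π r), S (i r) (i (π r))

/-- `(Σ_n)_n ∈ CovMat(α)`: symmetric positive definite, unit diagonal, off-diagonal
entries bounded by `n^{-α}`. -/
def CovMatSeq (α : ℝ) (S : ∀ n : ℕ, Matrix (Fin n) (Fin n) ℝ) : Prop :=
  ∀ n, (S n).IsSymm ∧ (S n).PosDef ∧ (∀ i, S n i i = 1) ∧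
    ∀ i j : Fin n, i ≠ j → |S n i j| ≤ 1 / (n : ℝ) ^ α

/-- Position `r` (0-based) lies in the `j`-th block of sizes `δ 0, δ 1, …`. -/
def inBlock {l : ℕ} (δ : Fin l → ℕ) (j : Fin l) (r : ℕ) : Prop :=
  (∑ j' ∈ Finset.univ.filter (· < j), δ j') ≤ r ∧
    r < ∑ j' ∈ Finset.univ.filter (· ≤ j), δ j'

/-- The family `Y` is a centered Gaussian family with covariance matrix `S`:
every linear combination is a centered real Gaussian with the corresponding variance. -/
def IsCenteredGaussianFamily (P : Measure Ω) {m : ℕ}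
    (Y : Fin m → Ω → ℝ) (S : Matrix (Fin m) (Fin m) ℝ) : Prop :=
  (∀ i, Measurable (Y i)) ∧
  ∀ c : Fin m → ℝ,
    Measure.map (fun ω => ∑ i, c i * Y i ω) P =
      gaussianReal 0 (Real.toNNReal (∑ i, ∑ j, c i * S i j * c j))

/-- The Gaussian triangular scheme `a` constructed from a covariance sequence `S`
via a filling bijection `φ` (with values in `{1,…,Δ_n}`) and Gaussian vectors `Y`. -/
def GaussianScheme (P : Measure Ω) (S : ∀ m, Matrix (Fin m) (Fin m) ℝ)
    (φ : ℕ → ℕ → ℕ → ℕ) (Y : ℕ → ℕ → Ω → ℝ) (a : ℕ → ℕ → ℕ → Ω → ℝ) : Prop :=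
  (∀ n, Set.BijOn (fun p : ℕ × ℕ => φ n p.1 p.2)
      {p : ℕ × ℕ | 1 ≤ p.1 ∧ p.1 ≤ p.2 ∧ p.2 ≤ n} (Set.Icc 1 (Δn n))) ∧
  (∀ n i j, j < i → φ n i j = φ n j i) ∧
  (∀ n, IsCenteredGaussianFamily P (fun t : Fin (Δn n) => Y n (t.1 + 1)) (S (Δn n))) ∧
  (∀ n i j, a n i j = Y n (φ n i j))

/-- Cyclic successor on `Fin k`. -/
def cyc {k : ℕ} (i : Fin k) : Fin k :=
  ⟨(i.1 + 1) % k, Nat.mod_lt _ (Nat.lt_of_le_of_lt (Nat.zero_le _) i.isLt)⟩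

/-- The multiset of edges of the cyclic multigraph of the tuple `t`. -/
def tupleEdges {k : ℕ} (t : Fin k → ℕ) : Multiset (Sym2 ℕ) :=
  Finset.univ.val.map fun i : Fin k => s(t i, t (cyc i))

/-- `kappa t l` = number of distinct `l`-fold edges of `t`. -/
def kappa {k : ℕ} (t : Fin k → ℕ) (l : ℕ) : ℕ :=
  ((tupleEdges t).toFinset.filter fun e => (tupleEdges t).count e = l).card

/-- Number of distinct loops of `t`. -/
def numLoops {k : ℕ} (t : Fin k → ℕ) : ℕ :=
  ((tupleEdges t).toFinset.filter fun e => e.IsDiag).card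

/-- `t` has at least one odd edge. -/
def hasOddEdge {k : ℕ} (t : Fin k → ℕ) : Prop :=
  ∃ e ∈ (tupleEdges t).toFinset, Odd ((tupleEdges t).count e)

/-- `t` has only even edges. -/
def hasOnlyEvenEdges {k : ℕ} (t : Fin k → ℕ) : Prop :=
  ∀ e ∈ (tupleEdges t).toFinset, Even ((tupleEdges t).count e)

/-- Vertex set of the tuple `t`. -/
def verts {k : ℕ} (t : Fin k → ℕ) : Finset ℕ := Finset.image t Finset.univ

/-- The set of `bn`-relevant `k`-tuples with entries in `{1,…,n}`. -/
def relTuples (n bn k : ℕ) : Finset (Fin k → ℕ) :=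
  (Fintype.piFinset fun _ : Fin k => Finset.Icc 1 n).filter
    fun t => ∀ i : Fin k, BRelevant n bn (t i) (t (cyc i))

/-- `t` and `s` have the same profile `κ`. -/
def sameProfile {k : ℕ} (t s : Fin k → ℕ) : Prop :=
  ∀ l ∈ Finset.Icc 1 k, kappa t l = kappa s l

/-- Equivalence class `𝒯(s)` of `s` in `[n]^k_b`. -/
def Tclass (n bn k : ℕ) (s : Fin k → ℕ) : Finset (Fin k → ℕ) :=
  (relTuples n bn k).filter fun t => sameProfile t s

/-- `𝒯^c(s,s')`: pairs of tuples with prescribed profiles having a common edge. -/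
def Tcommon (n bn k : ℕ) (s s' : Fin k → ℕ) : Finset ((Fin k → ℕ) × (Fin k → ℕ)) :=
  ((relTuples n bn k) ×ˢ (relTuples n bn k)).filter fun tt =>
    sameProfile tt.1 s ∧ sameProfile tt.2 s' ∧
      ((tupleEdges tt.1).toFinset ∩ (tupleEdges tt.2).toFinset).Nonempty

/-- `𝒯^c_l(s,s')`: pairs in `𝒯^c(s,s')` with exactly `l` common edges. -/
def TcommonL (n bn k : ℕ) (s s' : Fin k → ℕ) (l : ℕ) :
    Finset ((Fin k → ℕ) × (Fin k → ℕ)) :=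
  (Tcommon n bn k s s').filter fun tt =>
    ((tupleEdges tt.1).toFinset ∩ (tupleEdges tt.2).toFinset).card = l

/-!
Let `G` be the simple graph on `V_t` whose edges are the non-loop edges of `t`. The closed
walk `t_1, …, t_k, t_1` makes `G` connected, so `#V_t ≤ 1 + #E(G) = 1 + ∑ κ_l - ℓ(t)`, which
is (i). If (ii) failed, (i) would force `ℓ(t) = 0` and `#V_t = #E(G) + 1`, so `G` would be a
tree and every edge of `G` a bridge. A closed walk crosses a bridge an even number of times,
so every edge of `t` would be even.
-/

end RMT

theorem Equiv.Perm.even_card_filter_not_iff {ι : Type*} [Fintype ι] (σ : Equiv.Perm ι)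
    (p : ι → Prop) [DecidablePred p] : Even #{i | ¬(p i ↔ p (σ i))} := by
  have hterm : ∀ i, (if ¬(p i ↔ p (σ i)) then (1 : ZMod 2) else 0) =
      (if p i then 1 else 0) + (if p (σ i) then 1 else 0) := by
    intro i
    by_cases h₁ : p i <;> by_cases h₂ : p (σ i) <;> simp [h₁, h₂]
    decide
  rw [← ZMod.natCast_eq_zero_iff_even, natCast_card_filter, sum_congr rfl fun i _ => hterm i,
    sum_add_distrib, Equiv.sum_comp σ fun i => if p i then (1 : ZMod 2) else 0]
  exact CharTwo.add_self_eq_zero _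

-- The side of the bridge containing `u` flips exactly at the crossings of `s(u, v)`.
theorem SimpleGraph.IsBridge.even_card_filter_eq {V ι : Type*} [Fintype ι]
    {G : SimpleGraph V} {u v : V} (hb : G.IsBridge s(u, v)) (σ : Equiv.Perm ι) (f : ι → V)
    (hf : ∀ i, f i = f (σ i) ∨ G.Adj (f i) (f (σ i))) :
    Even #{i | s(f i, f (σ i)) = s(u, v)} := by
  set H := G.deleteEdges {s(u, v)}
  have hcross : ∀ i, s(f i, f (σ i)) = s(u, v) ↔
      ¬(H.Reachable u (f i) ↔ H.Reachable u (f (σ i))) := by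
    intro i
    constructor
    · intro he
      have huv : ¬H.Reachable u v := SimpleGraph.isBridge_iff.1 hb
      rcases Sym2.eq_iff.1 he with ⟨h₁, h₂⟩ | ⟨h₁, h₂⟩ <;> simp [h₁, h₂, huv]
    · intro hflip
      by_contra hne
      have hstep : H.Reachable (f i) (f (σ i)) := by
        rcases hf i with h | h
        · rw [h]
        · exact (SimpleGraph.deleteEdges_adj.2 ⟨h, hne⟩).reachable
      exact hflip ⟨fun h => h.trans hstep, fun h => h.trans hstep.symm⟩
  simp_rw [hcross]
  exact σ.even_card_filter_not_iff _

namespace RMT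

variable {k : ℕ} (t : Fin k → ℕ)

lemma cyc_eq_finRotate : (cyc : Fin k → Fin k) = finRotate k := by
  funext i
  have : NeZero k := ⟨i.pos.ne'⟩
  ext
  rw [finRotate_apply, Fin.val_add, Fin.val_one', Nat.add_mod_mod]
  rfl

lemma count_tupleEdges (e : Sym2 ℕ) :
    (tupleEdges t).count e = #{i | s(t i, t (cyc i)) = e} := by
  simp_rw [tupleEdges, Multiset.count_map, eq_comm (a := e)]
  rfl

lemma mem_tupleEdges {e : Sym2 ℕ} : e ∈ tupleEdges t ↔ ∃ i, s(t i, t (cyc i)) = e := by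
  simp [tupleEdges]

lemma card_toFinset_tupleEdges : #(tupleEdges t).toFinset = ∑ l ∈ Icc 1 k, kappa t l := by
  refine card_eq_sum_card_fiberwise fun e he => mem_Icc.2 ⟨?_, ?_⟩
  · exact Multiset.one_le_count_iff_mem.2 (Multiset.mem_toFinset.1 he)
  · simpa [tupleEdges] using Multiset.count_le_card e (tupleEdges t)

lemma mem_verts (i : Fin k) : t i ∈ verts t := mem_image_of_mem t (mem_univ i)

def tupleGraph : SimpleGraph (verts t) :=
  SimpleGraph.fromEdgeSet {e | e.map Subtype.val ∈ tupleEdges t}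

def tupleVert (i : Fin k) : verts t := ⟨t i, mem_verts t i⟩

lemma tupleVert_eq_or_adj (i : Fin k) :
    tupleVert t i = tupleVert t (cyc i) ∨
      (tupleGraph t).Adj (tupleVert t i) (tupleVert t (cyc i)) := by
  refine or_iff_not_imp_left.2 fun hne => (SimpleGraph.fromEdgeSet_adj _).2 ⟨?_, hne⟩
  exact (mem_tupleEdges t).2 ⟨i, rfl⟩

lemma tupleGraph_preconnected : (tupleGraph t).Preconnected := by
  rintro ⟨_, hx⟩ ⟨_, hy⟩
  obtain ⟨i, -, rfl⟩ := mem_image.1 hx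
  obtain ⟨j, -, rfl⟩ := mem_image.1 hy
  have hk : 0 < k := i.pos
  have hroot : ∀ m (hm : m < k),
      (tupleGraph t).Reachable (tupleVert t ⟨0, hk⟩) (tupleVert t ⟨m, hm⟩) := by
    intro m
    induction m with
    | zero => exact fun _ => .rfl
    | succ m ih =>
      intro hm
      have hcyc : cyc (⟨m, by omega⟩ : Fin k) = ⟨m + 1, hm⟩ := Fin.ext (Nat.mod_eq_of_lt hm)
      refine (ih (by omega)).trans ?_
      rcases tupleVert_eq_or_adj t ⟨m, by omega⟩ with h | h <;> rw [hcyc] at h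
      · rw [h]
      · exact h.reachable
  exact (hroot i i.isLt).symm.trans (hroot j j.isLt)

lemma tupleGraph_connected (h : (verts t).Nonempty) : (tupleGraph t).Connected :=
  (SimpleGraph.connected_iff _).2 ⟨tupleGraph_preconnected t, h.coe_sort⟩

lemma image_val_edgeSet_tupleGraph :
    Sym2.map Subtype.val '' (tupleGraph t).edgeSet = {e | e ∈ tupleEdges t ∧ ¬e.IsDiag} := by
  ext e
  rw [tupleGraph, SimpleGraph.edgeSet_fromEdgeSet]
  constructor
  · rintro ⟨e', ⟨he', hdiag⟩, rfl⟩
    exact ⟨he', by rwa [Sym2.isDiag_map Subtype.val_injective]⟩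
  · rintro ⟨he, hdiag⟩
    obtain ⟨i, rfl⟩ := (mem_tupleEdges t).1 he
    refine ⟨s(tupleVert t i, tupleVert t (cyc i)), ⟨he, ?_⟩, rfl⟩
    simpa [tupleVert] using hdiag

lemma card_edgeSet_tupleGraph :
    Nat.card (tupleGraph t).edgeSet = #{e ∈ (tupleEdges t).toFinset | ¬e.IsDiag} := by
  rw [Nat.card_coe_set_eq,
    ← Set.ncard_image_of_injective _ (Sym2.map.injective Subtype.val_injective),
    image_val_edgeSet_tupleGraph, ← Set.ncard_coe_finset]
  simp

lemma card_verts_le_card_nonloops_add_one :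
    #(verts t) ≤ #{e ∈ (tupleEdges t).toFinset | ¬e.IsDiag} + 1 := by
  rcases (verts t).eq_empty_or_nonempty with h | h
  · simp [h]
  · rw [← card_edgeSet_tupleGraph, ← Nat.card_eq_finsetCard]
    exact (tupleGraph_connected t h).card_vert_le_card_edgeSet_add_one

lemma even_count_tupleEdges_of_isBridge {e : Sym2 (verts t)} (he : (tupleGraph t).IsBridge e) :
    Even ((tupleEdges t).count (e.map Subtype.val)) := by
  induction e using Sym2.ind with
  | h u v =>
    have hstep := tupleVert_eq_or_adj t
    rw [cyc_eq_finRotate] at hstep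
    rw [count_tupleEdges, cyc_eq_finRotate]
    convert he.even_card_filter_eq (finRotate k) (tupleVert t) hstep using 4 with i
    rw [← (Sym2.map.injective Subtype.val_injective).eq_iff, Sym2.map_mk]
    rfl

theorem stmt14_general (k : ℕ) (t : Fin k → ℕ) :
    ((verts t).card : ℤ) ≤
        1 + (∑ l ∈ Finset.Icc 1 k, (kappa t l : ℤ)) - (numLoops t : ℤ) ∧
    (hasOddEdge t → (verts t).card ≤ ∑ l ∈ Finset.Icc 1 k, kappa t l) := by
  have hsum := card_toFinset_tupleEdges t
  have hsplit : numLoops t + #{e ∈ (tupleEdges t).toFinset | ¬e.IsDiag} =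
      #(tupleEdges t).toFinset := card_filter_add_card_filter_not _
  have hvert := card_verts_le_card_nonloops_add_one t
  refine ⟨by push_cast [← Nat.cast_sum]; omega, fun ⟨e, he, hodd⟩ => ?_⟩
  by_contra! hlt
  have hloops : numLoops t = 0 := by omega
  have htree : (tupleGraph t).IsTree := by
    refine SimpleGraph.isTree_iff_connected_and_card.2 ⟨tupleGraph_connected t ?_, ?_⟩
    · exact card_pos.1 (by omega)
    · rw [card_edgeSet_tupleGraph, Nat.card_eq_finsetCard]
      omega
  have hdiag : ¬e.IsDiag := fun hd =>
    notMem_empty e ((card_eq_zero.1 hloops).subset (mem_filter.2 ⟨he, hd⟩))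
  obtain ⟨e', he', rfl⟩ : e ∈ Sym2.map Subtype.val '' (tupleGraph t).edgeSet := by
    rw [image_val_edgeSet_tupleGraph]
    exact ⟨Multiset.mem_toFinset.1 he, hdiag⟩
  have hbridge := SimpleGraph.isAcyclic_iff_forall_isBridge.1 htree.isAcyclic he'
  exact Nat.not_even_iff_odd.2 hodd (even_count_tupleEdges_of_isBridge t hbridge)

/-- Vertex bounds for the cyclic multigraph of a tuple. -/
theorem stmt14 (n k : ℕ) (hk : 0 < k) (t : Fin k → ℕ)
    (ht : ∀ i, t i ∈ Finset.Icc 1 n) :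
    ((verts t).card : ℤ) ≤
        1 + (∑ l ∈ Finset.Icc 1 k, (kappa t l : ℤ)) - (numLoops t : ℤ) ∧
    (hasOddEdge t → (verts t).card ≤ ∑ l ∈ Finset.Icc 1 k, kappa t l) :=
  stmt14_general k t

end RMT
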